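/- Suppose r ≥ 3 is odd. Then for each sign ε ∈ {+1,−1} the following hold in Cl ⊗ Cl: p_{ε,−ε}·Π_{m=0}^{(r−1)/2} ( Ĉ − c_{2m}·(1⊗1) ) = 0, and p_{εε}·Π_{m=1}^{(r+1)/2} ( Ĉ − c_{2m−1}·(1⊗1) ) = 0, where c_k := (2k(2r−k) − r(2r−1))/(16(r−1)). -/

import Mathlib

/-! The elements `T_i = Γ_i ⊗ Γ_i` are pairwise commuting involutions with
`I₂ = (∑ T_i)² - 2r`, so `Ĉ` is a quadratic polynomial in `S = ∑ T_i`, and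
`Γ_{2r+1} ⊗ Γ_{2r+1} = (-1)^r ∏ T_i`. On a joint eigenspace of the `T_i` on which `k` of
them act by `-1`, `S = 2r - 2k`, `∏ T_i = (-1)^k` and `Ĉ = c_k = c_{2r-k}`. For odd `r`,
`p_{εε'} = p_{εε'} (1 - εε' ∏ T_i) / 2`, which kills the eigenspaces with `(-1)^k = εε'`; on
the remaining ones `k` or `2r - k` is among the indices of the product, so the product
vanishes. -/
open scoped TensorProduct

noncomputable section

/-- The quadratic form `x₁² + ⋯ + x_{2r}²` on `ℂ^{2r}`. -/
def Qf (r : ℕ) : QuadraticForm ℂ (Fin (2*r) → ℂ) :=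
  QuadraticMap.weightedSumSquares ℂ (fun _ : Fin (2*r) => (1:ℂ))

/-- The Clifford algebra of `Qf r`. -/
abbrev Cl (r : ℕ) := CliffordAlgebra (Qf r)

/-- The generators `Γ_i`. -/
def Γgen (r : ℕ) (i : Fin (2*r)) : Cl r :=
  CliffordAlgebra.ι (Qf r) (Pi.single i 1)

/-- The antisymmetrised products `Γ_{[i₁…i_k]}`. -/
def Γbr (r k : ℕ) (i : Fin k → Fin (2*r)) : Cl r :=
  ((k.factorial : ℂ))⁻¹ •
    ∑ σ : Equiv.Perm (Fin k),
      ((Equiv.Perm.sign σ : ℤ) : ℂ) • (List.ofFn fun j => Γgen r (i (σ j))).prod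

/-- The invariants `I_k ∈ Cl ⊗ Cl`. -/
def Ik (r k : ℕ) : Cl r ⊗[ℂ] Cl r :=
  ∑ i : Fin k → Fin (2*r), (Γbr r k i) ⊗ₜ[ℂ] (Γbr r k i)

/-- The split Casimir element `Ĉ = −I₂/(16(2r−2))`. -/
def sC (r : ℕ) : Cl r ⊗[ℂ] Cl r := (-(16*(2*(r:ℂ)-2))⁻¹) • Ik r 2

/-- The top element `Γ_{2r+1} = (−i)^r Γ₁⋯Γ_{2r}`. -/
def Γtop (r : ℕ) : Cl r :=
  ((-Complex.I)^r) • (List.ofFn fun i : Fin (2*r) => Γgen r i).prod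

/-- The chirality projector `p_ε = (1 + ε Γ_{2r+1})/2`. -/
def pCh (r : ℕ) (ε : ℂ) : Cl r := (2:ℂ)⁻¹ • (1 + ε • Γtop r)

/-- The chirality projectors `p_{εε'} = p_ε ⊗ p_{ε'}`. -/
def ppCh (r : ℕ) (ε ε' : ℂ) : Cl r ⊗[ℂ] Cl r := (pCh r ε) ⊗ₜ[ℂ] (pCh r ε')

/-- The eigenvalues `c_k = (2k(2r−k) − r(2r−1))/(16(r−1))`. -/
def cEv (r k : ℕ) : ℂ :=
  (2*(k:ℂ)*(2*(r:ℂ)-(k:ℂ)) - (r:ℂ)*(2*(r:ℂ)-1)) / (16*((r:ℂ)-1))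

/-- The spectral projectors `P_k = Π_{j≠k} (Ĉ − c_j)/(c_k − c_j)`. -/
def Pk (r k : ℕ) : Cl r ⊗[ℂ] Cl r :=
  (((List.range (r+1)).filter (fun j => j ≠ k)).map
    (fun j => (cEv r k - cEv r j)⁻¹ • (sC r - cEv r j • 1))).prod

/-- `P_r^S = (p_{++} + p_{−−})·P_r`. -/
def PrS (r : ℕ) : Cl r ⊗[ℂ] Cl r := (ppCh r 1 1 + ppCh r (-1) (-1)) * Pk r r

/-- The ascending factorial `a_k(u) = (u/2)(u/2+1)⋯(u/2+k−1)`. -/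
def asc (u : ℂ) (k : ℕ) : ℂ := ∏ j ∈ Finset.range k, (u/2 + (j:ℂ))

open Polynomial

theorem aeval_mul_eq_of_mul_eq {R A : Type*} [CommRing R] [CommRing A] [Algebra R A]
    {a b e : A} (h : a * e = b * e) (f : R[X]) : aeval a f * e = aeval b f * e := by
  obtain ⟨c, hc⟩ := sub_dvd_eval_sub a b (f.map (algebraMap R A))
  simp only [eval_map_algebraMap] at hc
  linear_combination c * h + e * hc

/- Split off one involution `x` along `2 = (1 + x) + (1 - x)`: on the image of `1 ± x` it acts
by `±1`, which shifts the sum by `±1` and, for `-`, flips the sign in front of the product. -/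
theorem one_sub_neg_one_pow_mul_prod_mul_aeval_sum_eq_zero {K A : Type*} [Field K] [NeZero (2 : K)]
    [CommRing A] [Algebra K A] (l : List A) (hl : ∀ x ∈ l, x * x = 1) (j : ℕ) (f : K[X])
    (hf : ∀ k ≤ l.length, Odd (k + j) → f.eval ((l.length : K) - 2 * k) = 0) :
    (1 - (-1) ^ j * l.prod) * aeval l.sum f = 0 := by
  induction l generalizing j f with
  | nil =>
    obtain ⟨i, rfl⟩ | hj := Nat.even_or_odd j
    · simp [← two_mul, pow_mul]
    · have hf0 : f.coeff 0 = 0 := by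
        simpa [coeff_zero_eq_eval_zero] using hf 0 le_rfl (by simpa using hj)
      simp [← coeff_zero_eq_aeval_zero', hf0]
  | cons x t ih =>
    simp only [List.length_cons, Nat.cast_succ] at hf
    simp only [List.forall_mem_cons] at hl
    simp only [List.prod_cons, List.sum_cons]
    have hplus : (1 - (-1) ^ j * t.prod) * aeval (t.sum + 1) f = 0 := by
      have := ih hl.2 j (f.comp (X + 1)) fun k hk hkj => by
        simpa [add_sub_right_comm] using hf k (by omega) hkj
      rwa [aeval_comp, map_add, aeval_X, map_one] at this
    have hminus : (1 - (-1) ^ (j + 1) * t.prod) * aeval (t.sum - 1) f = 0 := by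
      have := ih hl.2 (j + 1) (f.comp (X - 1)) fun k hk hkj => by
        have := hf (k + 1) (by omega) (by rwa [add_right_comm])
        rw [show (t.length : K) + 1 - 2 * (k + 1 : ℕ) = t.length - 2 * k - 1 by
          push_cast; ring] at this
        rwa [eval_comp, eval_sub, eval_X, eval_one]
      rwa [aeval_comp, map_sub, aeval_X, map_one] at this
    have hu : aeval (x + t.sum) f * (1 + x) = aeval (t.sum + 1) f * (1 + x) :=
      aeval_mul_eq_of_mul_eq (by linear_combination hl.1) f
    have hw : aeval (x + t.sum) f * (1 - x) = aeval (t.sum - 1) f * (1 - x) :=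
      aeval_mul_eq_of_mul_eq (by linear_combination -hl.1) f
    have h2 : IsUnit (2 : A) := by
      simpa only [map_ofNat] using (IsUnit.mk0 (2 : K) two_ne_zero).map (algebraMap K A)
    refine h2.mul_right_eq_zero.mp ?_
    linear_combination (1 - (-1) ^ j * (x * t.prod)) * (hu + hw) + (1 + x) * hplus
      + (1 - x) * hminus - (-1) ^ j * t.prod * (aeval (t.sum + 1) f - aeval (t.sum - 1) f) * hl.1

open scoped IsMulCommutative in
theorem one_sub_neg_one_pow_mul_prod_ofFn_mul_aeval_sum_eq_zero {K A : Type*} [Field K]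
    [NeZero (2 : K)] [Ring A] [Algebra K A] {n : ℕ} (y : Fin n → A)
    (hcomm : ∀ i i', Commute (y i) (y i')) (hsq : ∀ i, y i * y i = 1) (j : ℕ) (f : K[X])
    (hf : ∀ k ≤ n, Odd (k + j) → f.eval ((n : K) - 2 * k) = 0) :
    (1 - (-1) ^ j * (List.ofFn y).prod) * aeval (∑ i, y i) f = 0 := by
  let B := Algebra.adjoin K (Set.range y)
  have : IsMulCommutative B := Algebra.isMulCommutative_adjoin K <| by
    rintro _ ⟨i, rfl⟩ _ ⟨i', rfl⟩
    exact hcomm i i'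
  let z : Fin n → B := fun i => ⟨y i, Algebra.subset_adjoin ⟨i, rfl⟩⟩
  have hz := one_sub_neg_one_pow_mul_prod_mul_aeval_sum_eq_zero (List.ofFn z)
    (List.forall_mem_ofFn_iff.mpr fun i => Subtype.ext (hsq i)) j f (by simpa using hf)
  simpa only [map_mul, map_sub, map_one, map_pow, map_neg, map_list_prod, List.map_ofFn,
    List.sum_ofFn, ← aeval_algHom_apply, map_sum, map_zero, Subalgebra.coe_val,
    Function.comp_def, z]
    using congrArg B.val hz

theorem List.prod_mul_of_forall_anticommute {A : Type*} [Ring A] (l : List A) (x : A)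
    (h : ∀ y ∈ l, y * x = -(x * y)) :
    l.prod * x = ((-1 : ℤ) ^ l.length) • (x * l.prod) := by
  induction l with
  | nil => simp
  | cons y t ih =>
    simp only [List.forall_mem_cons] at h
    rw [List.prod_cons, mul_assoc, ih h.2, mul_smul_comm, ← mul_assoc, h.1, List.length_cons,
      pow_succ, mul_neg_one, neg_smul, neg_mul, smul_neg, mul_assoc]

theorem List.prod_mul_prod_self_of_pairwise_anticommute {A : Type*} [Ring A] (l : List A)
    (hsq : ∀ x ∈ l, x * x = 1) (hanti : l.Pairwise fun a b => b * a = -(a * b)) :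
    l.prod * l.prod = ((-1 : ℤ) ^ l.length.choose 2) • 1 := by
  induction l with
  | nil => simp
  | cons x t ih =>
    simp only [List.forall_mem_cons] at hsq
    rw [List.pairwise_cons] at hanti
    rw [List.prod_cons, mul_assoc, ← mul_assoc t.prod, t.prod_mul_of_forall_anticommute x hanti.1,
      smul_mul_assoc, mul_smul_comm, ← mul_assoc, ← mul_assoc, hsq.1, one_mul, ih hsq.2 hanti.2,
      smul_smul, List.length_cons, Nat.choose_succ_succ, Nat.choose_one_right, pow_add]

theorem tmul_prod_ofFn {R A B : Type*} [CommSemiring R] [Semiring A] [Semiring B] [Algebra R A]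
    [Algebra R B] {n : ℕ} (x : Fin n → A) (y : Fin n → B) :
    (List.ofFn x).prod ⊗ₜ[R] (List.ofFn y).prod =
      (List.ofFn fun i => x i ⊗ₜ[R] y i).prod := by
  induction n with
  | zero => simp [Algebra.TensorProduct.one_def]
  | succ n ih =>
    simp only [List.ofFn_succ, List.prod_cons, ← ih, Algebra.TensorProduct.tmul_mul_tmul]

section Clifford

variable (r : ℕ)

theorem Qf_single (i : Fin (2 * r)) : Qf r (Pi.single i 1) = 1 := by
  simp [Qf, QuadraticMap.weightedSumSquares_apply, Pi.single_apply]

theorem Qf_isOrtho_single {i i' : Fin (2 * r)} (h : i ≠ i') :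
    (Qf r).IsOrtho (Pi.single i 1) (Pi.single i' 1) := by
  simp [QuadraticMap.isOrtho_def, Qf, QuadraticMap.weightedSumSquares_apply, Pi.single_apply,
    mul_add, Finset.sum_add_distrib, ← ite_and, h, h.symm, eq_comm]

theorem Γgen_mul_self (i : Fin (2 * r)) : Γgen r i * Γgen r i = 1 := by
  rw [Γgen, CliffordAlgebra.ι_sq_scalar, Qf_single, map_one]

theorem Γgen_mul_Γgen_of_ne {i i' : Fin (2 * r)} (h : i ≠ i') :
    Γgen r i * Γgen r i' = -(Γgen r i' * Γgen r i) :=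
  CliffordAlgebra.ι_mul_ι_comm_of_isOrtho (Qf_isOrtho_single r h)

theorem Γbr_two (i : Fin 2 → Fin (2 * r)) :
    Γbr r 2 i = if i 0 = i 1 then 0 else Γgen r (i 0) * Γgen r (i 1) := by
  have hperm : (Finset.univ : Finset (Equiv.Perm (Fin 2))) = {1, Equiv.swap 0 1} := by decide
  rw [Γbr, hperm, Finset.sum_pair (by decide)]
  split_ifs with h
  · simp [List.ofFn_succ, h]
  · simp [List.ofFn_succ, Γgen_mul_Γgen_of_ne r (Ne.symm h), Nat.factorial, ← two_smul ℂ,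
      smul_smul]

def Γdiag (i : Fin (2 * r)) : Cl r ⊗[ℂ] Cl r := Γgen r i ⊗ₜ Γgen r i

theorem Γdiag_mul_self (i : Fin (2 * r)) : Γdiag r i * Γdiag r i = 1 := by
  rw [Γdiag, Algebra.TensorProduct.tmul_mul_tmul, Γgen_mul_self, Algebra.TensorProduct.one_def]

theorem commute_Γdiag (i i' : Fin (2 * r)) : Commute (Γdiag r i) (Γdiag r i') := by
  obtain rfl | h := eq_or_ne i i'
  · exact Commute.refl _
  · rw [Commute, SemiconjBy, Γdiag, Γdiag, Algebra.TensorProduct.tmul_mul_tmul,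
      Algebra.TensorProduct.tmul_mul_tmul, Γgen_mul_Γgen_of_ne r h, TensorProduct.neg_tmul,
      TensorProduct.tmul_neg, neg_neg]

theorem Ik_two : Ik r 2 = (∑ i, Γdiag r i) ^ 2 - (2 * r : ℂ) • 1 := by
  have hIk : Ik r 2 = ∑ a, ∑ b, if a = b then 0 else Γdiag r a * Γdiag r b := by
    rw [Ik, ← Fintype.sum_prod_type', ← (finTwoArrowEquiv _).symm.sum_comp]
    refine Fintype.sum_congr _ _ fun p => ?_
    rw [Γbr_two]
    split_ifs <;> simp_all [Γdiag, Algebra.TensorProduct.tmul_mul_tmul]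
  have hdiag :
      ∑ a : Fin (2 * r), ∑ b : Fin (2 * r), (if a = b then 1 else 0 : Cl r ⊗[ℂ] Cl r) =
        (2 * r : ℂ) • 1 := by
    simp [Finset.sum_ite_eq, ← Nat.cast_smul_eq_nsmul ℂ]
  rw [eq_sub_iff_add_eq, hIk, ← hdiag, ← Finset.sum_add_distrib, sq, Finset.sum_mul_sum]
  refine Finset.sum_congr rfl fun a _ => ?_
  rw [← Finset.sum_add_distrib]
  refine Finset.sum_congr rfl fun b _ => ?_
  split_ifs with h
  · rw [h, Γdiag_mul_self, zero_add]
  · rw [add_zero]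

def casimirPoly : ℂ[X] := C (-(16 * (2 * (r : ℂ) - 2))⁻¹) * (X ^ 2 - C (2 * (r : ℂ)))

theorem sC_eq_aeval : sC r = aeval (∑ i, Γdiag r i) (casimirPoly r) := by
  rw [sC, Ik_two, casimirPoly, map_mul, map_sub, aeval_C, aeval_C, map_pow, aeval_X,
    Algebra.algebraMap_eq_smul_one, Algebra.algebraMap_eq_smul_one, smul_mul_assoc, one_mul,
    smul_sub]

theorem eval_casimirPoly (hr : r ≠ 1) (k : ℕ) :
    (casimirPoly r).eval (2 * (r : ℂ) - 2 * k) = cEv r k := by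
  have : (r : ℂ) - 1 ≠ 0 := sub_ne_zero.mpr (mod_cast hr)
  simp only [casimirPoly, cEv, eval_mul, eval_sub, eval_pow, eval_X, eval_C]
  field_simp
  ring

theorem cEv_two_mul_sub (k : ℕ) (hk : k ≤ 2 * r) : cEv r (2 * r - k) = cEv r k := by
  rw [cEv, cEv, Nat.cast_sub hk]
  push_cast
  ring

theorem Γtop_mul_self : Γtop r * Γtop r = 1 := by
  have hL := (List.ofFn (Γgen r)).prod_mul_prod_self_of_pairwise_anticommute
    (List.forall_mem_ofFn_iff.mpr (Γgen_mul_self r))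
    (List.pairwise_ofFn.mpr fun _ _ h => Γgen_mul_Γgen_of_ne r h.ne')
  have hsign : (-1 : ℂ) ^ r * (-1) ^ (2 * r).choose 2 = 1 := by
    have hc : (2 * r).choose 2 + r = 2 * (r * r) := by
      rw [Nat.choose_two_right]
      rcases r with _ | m
      · rfl
      · rw [show 2 * (m + 1) * (2 * (m + 1) - 1) = 2 * ((m + 1) * (2 * m + 1)) by
          rw [show 2 * (m + 1) - 1 = 2 * m + 1 by omega]; ring, Nat.mul_div_cancel_left _ two_pos]
        ring
    rw [← pow_add, add_comm, hc, pow_mul, neg_one_sq, one_pow]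
  rw [Γtop, smul_mul_smul_comm, hL, ← mul_pow, neg_mul_neg, Complex.I_mul_I,
    ← Int.cast_smul_eq_zsmul ℂ, smul_smul, List.length_ofFn]
  push_cast
  rw [hsign, one_smul]

theorem Γtop_tmul_Γtop :
    Γtop r ⊗ₜ Γtop r = ((-1 : ℂ) ^ r) • (List.ofFn (Γdiag r)).prod := by
  rw [Γtop, TensorProduct.smul_tmul_smul, tmul_prod_ofFn, ← mul_pow, neg_mul_neg,
    Complex.I_mul_I]
  rfl

theorem pCh_mul_Γtop {ε : ℂ} (hε : ε * ε = 1) : pCh r ε * Γtop r = ε • pCh r ε := by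
  rw [pCh, smul_mul_assoc, add_mul, one_mul, smul_mul_assoc, Γtop_mul_self]
  linear_combination (norm := module) (-2⁻¹ : ℂ) • hε • Γtop r

theorem ppCh_mul_Γtop_tmul_Γtop {ε ε' : ℂ} (hε : ε * ε = 1) (hε' : ε' * ε' = 1) :
    ppCh r ε ε' * (Γtop r ⊗ₜ Γtop r) = (ε * ε') • ppCh r ε ε' := by
  rw [ppCh, Algebra.TensorProduct.tmul_mul_tmul, pCh_mul_Γtop r hε, pCh_mul_Γtop r hε',
    TensorProduct.smul_tmul_smul]

theorem ppCh_mul_eq_zero_of_one_sub_mul_eq_zero (hro : Odd r) {ε ε' : ℂ}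
    (hε : ε * ε = 1) (hε' : ε' * ε' = 1) (j : ℕ) (hj : ε * ε' = (-1) ^ j)
    {Y : Cl r ⊗[ℂ] Cl r} (hY : (1 - (-1) ^ j * (List.ofFn (Γdiag r)).prod) * Y = 0) :
    ppCh r ε ε' * Y = 0 := by
  set P := (List.ofFn (Γdiag r)).prod
  have hP : (-1) ^ j * P = -((-1 : ℂ) ^ j • (Γtop r ⊗ₜ Γtop r)) := by
    rw [Γtop_tmul_Γtop, hro.neg_one_pow, neg_one_smul, smul_neg, neg_neg, Algebra.smul_def,
      map_pow, map_neg, map_one]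
  have hproj : ppCh r ε ε' * (1 - (-1) ^ j * P) = (2 : ℂ) • ppCh r ε ε' := by
    rw [hP, sub_neg_eq_add, mul_add, mul_one, mul_smul_comm, ppCh_mul_Γtop_tmul_Γtop r hε hε',
      hj, smul_smul, ← pow_add, ← two_mul, pow_mul, neg_one_sq, one_pow, one_smul, two_smul]
  calc ppCh r ε ε' * Y = (2⁻¹ : ℂ) • (ppCh r ε ε' * (1 - (-1) ^ j * P) * Y) := by
        rw [hproj, smul_mul_assoc, smul_smul, inv_mul_cancel₀ two_ne_zero, one_smul]
    _ = 0 := by rw [mul_assoc, hY, mul_zero, smul_zero]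

theorem one_sub_neg_one_pow_mul_prod_Γdiag_mul_prod_sC_sub_eq_zero (hr : r ≠ 1)
    (j M : ℕ) (κ : ℕ → ℕ) (hκ : ∀ k ≤ r, Odd (k + j) → ∃ m < M, κ m = k) :
    (1 - (-1) ^ j * (List.ofFn (Γdiag r)).prod) *
      ((List.range M).map fun m => sC r - cEv r (κ m) • 1).prod = 0 := by
  have hprod : ((List.range M).map fun m => sC r - cEv r (κ m) • 1).prod =
      aeval (∑ i, Γdiag r i)
        ((List.range M).map fun m => casimirPoly r - C (cEv r (κ m))).prod := by
    rw [map_list_prod, List.map_map]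
    congr 1
    refine List.map_congr_left fun m _ => ?_
    rw [Function.comp_apply, map_sub, aeval_C, Algebra.algebraMap_eq_smul_one, sC_eq_aeval]
  rw [hprod]
  refine one_sub_neg_one_pow_mul_prod_ofFn_mul_aeval_sum_eq_zero (Γdiag r) (commute_Γdiag r)
    (Γdiag_mul_self r) j _ fun k hk hkj => ?_
  have hroot : ∃ m < M, cEv r (κ m) = cEv r k := by
    rcases le_or_gt k r with hkr | hkr
    · obtain ⟨m, hm, hmk⟩ := hκ k hkr hkj
      exact ⟨m, hm, by rw [hmk]⟩
    · obtain ⟨m, hm, hmk⟩ := hκ (2 * r - k) (by omega) (by rw [Nat.odd_iff] at hkj ⊢; omega)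
      exact ⟨m, hm, by rw [hmk, cEv_two_mul_sub r k hk]⟩
  obtain ⟨m, hm, hmk⟩ := hroot
  rw [eval_list_prod, List.prod_eq_zero_iff, List.map_map]
  refine List.mem_map.mpr ⟨m, List.mem_range.mpr hm, ?_⟩
  simp [Nat.cast_mul, eval_casimirPoly r hr, hmk]

end Clifford

/-- for odd `r ≥ 3`,
`p_{ε,−ε}·Π_{m=0}^{(r−1)/2} (Ĉ − c_{2m}·1) = 0` and
`p_{εε}·Π_{m=1}^{(r+1)/2} (Ĉ − c_{2m−1}·1) = 0`. -/
theorem sC_char_idens_odd_r (r : ℕ) (hr : 3 ≤ r) (hro : Odd r)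
    (ε : ℂ) (hε : ε = 1 ∨ ε = -1) :
    ppCh r ε (-ε) * ((List.range ((r-1)/2+1)).map (fun m => sC r - cEv r (2*m) • 1)).prod = 0 ∧
    ppCh r ε ε * ((List.range ((r+1)/2)).map (fun m => sC r - cEv r (2*m+1) • 1)).prod = 0 := by
  have hε2 : ε * ε = 1 := by rcases hε with rfl | rfl <;> norm_num
  have hr1 : r ≠ 1 := by omega
  have hr2 : r % 2 = 1 := Nat.odd_iff.mp hro
  constructor
  · refine ppCh_mul_eq_zero_of_one_sub_mul_eq_zero r hro hε2 (by rwa [neg_mul_neg]) 1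
      (by rw [mul_neg, hε2, pow_one]) <|
      one_sub_neg_one_pow_mul_prod_Γdiag_mul_prod_sC_sub_eq_zero r hr1 1 _ _ fun k hk hkj => ?_
    rw [Nat.odd_iff] at hkj
    exact ⟨k / 2, by omega, by omega⟩
  · refine ppCh_mul_eq_zero_of_one_sub_mul_eq_zero r hro hε2 hε2 0 (by rw [hε2, pow_zero]) <|
      one_sub_neg_one_pow_mul_prod_Γdiag_mul_prod_sC_sub_eq_zero r hr1 0 _ _ fun k hk hkj => ?_
    rw [Nat.odd_iff] at hkj
    exact ⟨k / 2, by omega, by omega⟩
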